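/- arXiv:2605.26964 — 4 statements merged into one kernel-verified Lean document; each statement's English description precedes it below -/
import Mathlib

section
/- Under conditional parallel trends, consistency, no anticipation, and overlap, the fATT admits the inverse-weighting representation: τ₀(t) = E[(D/p₀)·ΔY(t)] − E[ (1−D)·π₀(X) / (p₀·(1−π₀(X))) · ΔY(t) ] for every t, where p₀ = P(D=1) and π₀(X) = P(D=1|X). -/
open MeasureTheory

/-- Under conditional parallel trends, consistency, no anticipation, and
overlap, the fATT admits the inverse-weighting representation:
`τ₀(t) = E[(D/p₀)·ΔY(t)] − E[(1−D)·π₀(X)/(p₀·(1−π₀(X))) · ΔY(t)]` for every `t`,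
where `τ₀(t) = E[ΔY¹(t) − ΔY⁰(t) | D=1]`, `p₀ = P(D=1)`, `π₀(X) = E[D|X]`, and
`E[f | D=1] = E[f·D]/p₀`. -/
theorem stmt3 {Ω E T : Type*} (mX : MeasurableSpace Ω) [MeasurableSpace Ω] [MeasurableSpace E]
    (P : Measure Ω) [IsProbabilityMeasure P]
    (D : Ω → ℝ) (X : Ω → E) (π₀ : E → ℝ)
    (ΔY1 ΔY0 ΔY : T → Ω → ℝ) (μ₀ ν : T → Ω → ℝ) (p₀ c : ℝ)
    (hmX : mX = MeasurableSpace.comap X inferInstance)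
    (hle : mX ≤ ‹MeasurableSpace Ω›)
    (hD : ∀ ω, D ω = 0 ∨ D ω = 1) (hDm : Measurable D) (hX : Measurable X)
    -- consistency of the observed change
    (hΔY : ∀ t ω, ΔY t ω = D ω * ΔY1 t ω + (1 - D ω) * ΔY0 t ω)
    -- overlap
    (hc : c ∈ Set.Ioo (0 : ℝ) (1 / 2))
    (hπ : (fun ω => π₀ (X ω)) =ᵐ[P] P[D | mX])
    (hover : ∀ᵐ ω ∂P, c ≤ π₀ (X ω) ∧ π₀ (X ω) ≤ 1 - c)
    -- μ₀ t is a version of E[ΔY(t) | X, D=0]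
    (hμ₀meas : ∀ t, Measurable[mX] (μ₀ t))
    (hμ₀ : ∀ t, P[(fun ω => (1 - D ω) * (ΔY t ω - μ₀ t ω)) | mX] =ᵐ[P] 0)
    -- conditional parallel trends: ν t is a version of E[ΔY⁰(t) | X, D=1]
    -- and of E[ΔY⁰(t) | X, D=0]
    (hνmeas : ∀ t, Measurable[mX] (ν t))
    (hν1 : ∀ t, P[(fun ω => D ω * (ΔY0 t ω - ν t ω)) | mX] =ᵐ[P] 0)
    (hν0 : ∀ t, P[(fun ω => (1 - D ω) * (ΔY0 t ω - ν t ω)) | mX] =ᵐ[P] 0)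
    (hp₀ : p₀ = ∫ ω, D ω ∂P) (hp₀pos : 0 < p₀) (hp₀lt : p₀ < 1)
    -- integrability
    (hint : ∀ t, Integrable (fun ω => (ΔY1 t ω - ΔY0 t ω) * D ω) P)
    (hintY : ∀ t, Integrable (ΔY t) P) (hintY0 : ∀ t, Integrable (ΔY0 t) P)
    (hintμ₀ : ∀ t, Integrable (μ₀ t) P) (hintν : ∀ t, Integrable (ν t) P)
    (hintw : ∀ t, Integrable
      (fun ω => (1 - D ω) * π₀ (X ω) / (p₀ * (1 - π₀ (X ω))) * ΔY t ω) P) :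
    ∀ t, (∫ ω, (ΔY1 t ω - ΔY0 t ω) * D ω ∂P) / p₀
      = (∫ ω, D ω / p₀ * ΔY t ω ∂P)
        - ∫ ω, (1 - D ω) * π₀ (X ω) / (p₀ * (1 - π₀ (X ω))) * ΔY t ω ∂P := by
  intro t
  obtain ⟨hc0, hc12⟩ := hc
  rename_i mΩ mE hPP
  by_cases hm : mX ≤ mΩ
  case neg =>
    exfalso
    rw [condExp_of_not_le hm] at hπ
    haveI : (MeasureTheory.ae P).NeBot := ae_neBot.mpr (IsProbabilityMeasure.ne_zero P)
    obtain ⟨ω, hω1, hω2⟩ := (hover.and hπ).exists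
    have h0 : π₀ (X ω) = 0 := hω2
    exact absurd (h0 ▸ hω1.1) (not_le.mpr hc0)
  case pos =>
      have hp₀ne : p₀ ≠ 0 := ne_of_gt hp₀pos
      have hDb : ∀ ω, ‖D ω‖ ≤ 1 := by
        intro ω; rcases hD ω with h | h <;> simp [h]
      have h1Db : ∀ ω, ‖1 - D ω‖ ≤ 1 := by
        intro ω; rcases hD ω with h | h <;> simp [h]
      have hDae : AEStronglyMeasurable[mΩ] D P :=
        hDm.stronglyMeasurable.aestronglyMeasurable
      have h1Dae : AEStronglyMeasurable[mΩ] (fun ω => 1 - D ω) P :=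
        (stronglyMeasurable_const.sub hDm.stronglyMeasurable).aestronglyMeasurable
      have hDint : Integrable D P :=
        Integrable.mono' (integrable_const 1) hDae
          (Filter.Eventually.of_forall hDb)
      have h1Dint : Integrable (fun ω => 1 - D ω) P := (integrable_const 1).sub hDint
      haveI : SigmaFinite (P.trim hm) := by
        haveI : IsFiniteMeasure (P.trim hm) := isFiniteMeasure_trim hm
        infer_instance
      set π : Ω → ℝ := P[D | mX] with hπdef
      have hπsm : StronglyMeasurable[mX] π := stronglyMeasurable_condExp
      have hoverπ : ∀ᵐ ω ∂P, c ≤ π ω ∧ π ω ≤ 1 - c := by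
        filter_upwards [hover, hπ] with ω h1 h2
        rw [← h2]; exact h1
      have hνsm : StronglyMeasurable[mX] (ν t) := (hνmeas t).stronglyMeasurable
      -- integrabilities
      have iDY0 : Integrable (fun ω => D ω * ΔY0 t ω) P :=
        (hintY0 t).bdd_mul hDae (Filter.Eventually.of_forall hDb)
      have i1DY0 : Integrable (fun ω => (1 - D ω) * ΔY0 t ω) P :=
        (hintY0 t).bdd_mul h1Dae (Filter.Eventually.of_forall h1Db)
      have iDν : Integrable (fun ω => ν t ω * D ω) P :=
        ((hintν t).bdd_mul hDae
          (Filter.Eventually.of_forall hDb)).congr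
          (Filter.Eventually.of_forall fun ω => mul_comm _ _)
      have i1Dν : Integrable (fun ω => ν t ω * (1 - D ω)) P :=
        ((hintν t).bdd_mul h1Dae
          (Filter.Eventually.of_forall h1Db)).congr
          (Filter.Eventually.of_forall fun ω => mul_comm _ _)
      have iDY1 : Integrable (fun ω => D ω * ΔY1 t ω) P := by
        have heq : (fun ω => D ω * ΔY1 t ω)
            = fun ω => (ΔY1 t ω - ΔY0 t ω) * D ω + D ω * ΔY0 t ω := by
          funext ω; ring
        rw [heq]; exact (hint t).add iDY0
      -- conditional expectation of 1 - D
      have hce1D : P[(fun ω => 1 - D ω) | mX] =ᵐ[P] fun ω => 1 - π ω := by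
        have h1 : P[(fun _ : Ω => (1:ℝ)) - D | mX]
            =ᵐ[P] P[(fun _ : Ω => (1:ℝ)) | mX] - P[D | mX] :=
          condExp_sub (integrable_const 1) hDint mX
        have h2 : P[(fun _ : Ω => (1:ℝ)) | mX] = fun _ => (1:ℝ) := condExp_const hm 1
        filter_upwards [h1] with ω hω
        show P[(fun _ : Ω => (1:ℝ)) - D | mX] ω = 1 - π ω
        simpa [h2] using hω
      -- P[(1-D) * ΔY0 | mX] = ν * (1 - π)
      have hA : P[(fun ω => (1 - D ω) * ΔY0 t ω) | mX]
          =ᵐ[P] fun ω => ν t ω * (1 - π ω) := by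
        have hsub : P[(fun ω => (1 - D ω) * ΔY0 t ω) - (fun ω => ν t ω * (1 - D ω)) | mX]
            =ᵐ[P] P[(fun ω => (1 - D ω) * ΔY0 t ω) | mX]
              - P[(fun ω => ν t ω * (1 - D ω)) | mX] :=
          condExp_sub i1DY0 i1Dν mX
        have heq : (fun ω => (1 - D ω) * ΔY0 t ω) - (fun ω => ν t ω * (1 - D ω))
            = fun ω => (1 - D ω) * (ΔY0 t ω - ν t ω) := by
          funext ω; simp only [Pi.sub_apply]; ring
        rw [heq] at hsub
        have hpull : P[(ν t) * (fun ω => 1 - D ω) | mX]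
            =ᵐ[P] (ν t) * P[(fun ω => 1 - D ω) | mX] :=
          condExp_mul_of_stronglyMeasurable_left hνsm i1Dν h1Dint
        filter_upwards [hsub, hν0 t, hpull, hce1D] with ω h1 h2 h3 h4
        have h2' : (P[(fun ω => (1 - D ω) * (ΔY0 t ω - ν t ω)) | mX]) ω = 0 := h2
        rw [h2'] at h1
        have heq2 : (P[(fun ω => (1 - D ω) * ΔY0 t ω) | mX]) ω
            = (P[(fun ω => ν t ω * (1 - D ω)) | mX]) ω :=
          sub_eq_zero.mp (by simpa [Pi.sub_apply] using h1.symm)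
        rw [heq2]
        have h3' : (P[(fun ω => ν t ω * (1 - D ω)) | mX]) ω
            = ν t ω * (P[(fun ω => 1 - D ω) | mX]) ω := h3
        rw [h3', h4]
      -- P[D * ΔY0 | mX] = ν * π
      have hB : P[(fun ω => D ω * ΔY0 t ω) | mX] =ᵐ[P] fun ω => ν t ω * π ω := by
        have hsub : P[(fun ω => D ω * ΔY0 t ω) - (fun ω => ν t ω * D ω) | mX]
            =ᵐ[P] P[(fun ω => D ω * ΔY0 t ω) | mX] - P[(fun ω => ν t ω * D ω) | mX] :=
          condExp_sub iDY0 iDν mX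
        have heq : (fun ω => D ω * ΔY0 t ω) - (fun ω => ν t ω * D ω)
            = fun ω => D ω * (ΔY0 t ω - ν t ω) := by
          funext ω; simp only [Pi.sub_apply]; ring
        rw [heq] at hsub
        have hpull : P[(ν t) * D | mX] =ᵐ[P] (ν t) * P[D | mX] :=
          condExp_mul_of_stronglyMeasurable_left hνsm iDν hDint
        filter_upwards [hsub, hν1 t, hpull] with ω h1 h2 h3
        have h2' : (P[(fun ω => D ω * (ΔY0 t ω - ν t ω)) | mX]) ω = 0 := h2
        rw [h2'] at h1
        have heq2 : (P[(fun ω => D ω * ΔY0 t ω) | mX]) ω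
            = (P[(fun ω => ν t ω * D ω) | mX]) ω :=
          sub_eq_zero.mp (by simpa [Pi.sub_apply] using h1.symm)
        rw [heq2]
        exact h3
      -- the weight
      set w : Ω → ℝ := fun ω => π ω / (1 - π ω) with hwdef
      have hwsm : StronglyMeasurable[mX] w :=
        (hπsm.measurable.div (measurable_const.sub hπsm.measurable)).stronglyMeasurable
      have hwae : AEStronglyMeasurable[mΩ] w P := (hwsm.mono hm).aestronglyMeasurable
      have hwb : ∀ᵐ ω ∂P, ‖w ω‖ ≤ (1 - c) / c := by
        filter_upwards [hoverπ] with ω hω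
        obtain ⟨h1, h2⟩ := hω
        have hπ0 : 0 ≤ π ω := le_trans (le_of_lt hc0) h1
        have h1π : c ≤ 1 - π ω := by linarith
        have h1πpos : 0 < 1 - π ω := lt_of_lt_of_le hc0 h1π
        rw [Real.norm_eq_abs, abs_of_nonneg (div_nonneg hπ0 (le_of_lt h1πpos))]
        exact div_le_div₀ (by linarith) h2 hc0 h1π
      have iwf1 : Integrable (fun ω => w ω * ((1 - D ω) * ΔY0 t ω)) P :=
        i1DY0.bdd_mul hwae hwb
      -- key identity: ∫ w * (1-D) * ΔY0 = ∫ D * ΔY0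
      have key : ∫ ω, w ω * ((1 - D ω) * ΔY0 t ω) ∂P = ∫ ω, D ω * ΔY0 t ω ∂P := by
        have e1 : ∫ ω, w ω * ((1 - D ω) * ΔY0 t ω) ∂P
            = ∫ ω, (P[w * (fun ω => (1 - D ω) * ΔY0 t ω) | mX]) ω ∂P := by
          rw [integral_condExp hm]
          exact integral_congr_ae (Filter.Eventually.of_forall fun ω => rfl)
        have hpull : P[w * (fun ω => (1 - D ω) * ΔY0 t ω) | mX]
            =ᵐ[P] w * P[(fun ω => (1 - D ω) * ΔY0 t ω) | mX] :=
          condExp_mul_of_stronglyMeasurable_left hwsm iwf1 i1DY0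
        have e2 : (w * P[(fun ω => (1 - D ω) * ΔY0 t ω) | mX])
            =ᵐ[P] P[(fun ω => D ω * ΔY0 t ω) | mX] := by
          filter_upwards [hA, hB, hoverπ] with ω h1 h2 hω
          obtain ⟨h3, h4⟩ := hω
          have h1πne : (1:ℝ) - π ω ≠ 0 := by
            have : (0:ℝ) < 1 - π ω := by linarith
            exact ne_of_gt this
          simp only [Pi.mul_apply]
          rw [h1, h2, hwdef]
          field_simp
        rw [e1, integral_congr_ae (hpull.trans e2), integral_condExp hm]
      -- rewrite the three integrals of the goal
      have hR1 : ∫ ω, D ω / p₀ * ΔY t ω ∂P = p₀⁻¹ * ∫ ω, D ω * ΔY1 t ω ∂P := by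
        have heq : (fun ω => D ω / p₀ * ΔY t ω)
            = fun ω => p₀⁻¹ * (D ω * ΔY1 t ω) := by
          funext ω
          rcases hD ω with h | h <;> simp [h, hΔY t ω] <;> ring
        rw [heq, integral_const_mul]
      have hR2 : ∫ ω, (1 - D ω) * π₀ (X ω) / (p₀ * (1 - π₀ (X ω))) * ΔY t ω ∂P
          = p₀⁻¹ * ∫ ω, w ω * ((1 - D ω) * ΔY0 t ω) ∂P := by
        rw [← integral_const_mul]
        apply integral_congr_ae
        filter_upwards [hπ, hoverπ] with ω h1 h2
        obtain ⟨h3, h4⟩ := h2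
        have hπeq : π₀ (X ω) = π ω := h1
        have h1πne : (1:ℝ) - π ω ≠ 0 := by
          have : (0:ℝ) < 1 - π ω := by linarith
          exact ne_of_gt this
        rcases hD ω with h | h
        · have hYeq : ΔY t ω = ΔY0 t ω := by rw [hΔY t ω, h]; ring
          rw [hπeq, hYeq, hwdef, h]
          field_simp
        · rw [h]
          simp [hwdef]
      have hsplit : ∫ ω, (ΔY1 t ω - ΔY0 t ω) * D ω ∂P
          = (∫ ω, D ω * ΔY1 t ω ∂P) - ∫ ω, D ω * ΔY0 t ω ∂P := by
        have heq : (fun ω => (ΔY1 t ω - ΔY0 t ω) * D ω)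
            = fun ω => D ω * ΔY1 t ω - D ω * ΔY0 t ω := by
          funext ω; ring
        rw [heq, integral_sub iDY1 iDY0]
      rw [hsplit, hR1, hR2, key, sub_div, div_eq_inv_mul, div_eq_inv_mul]
end

section
/- (Moment identity of the DR score) Let ψ(W) = (D/p₀)(ΔY − μ₀(X)) − ((1−D)π₀(X)/(p₀(1−π₀(X))))(ΔY − μ₀(X)), where π₀(X) = E[D|X], μ₀(x) = E[ΔY | X=x, D=0], and p₀ = P(D=1) ∈ (0,1). Under overlap c ≤ π₀(X) ≤ 1−c a.s. and integrability, E[ψ(W)] = E[ΔY | D=1] − E[μ₀(X) | D=1]. -/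
open MeasureTheory

theorem stmt5_aux {Ω E : Type*} {m0 : MeasurableSpace Ω} [MeasurableSpace E]
    (P : Measure Ω) [IsProbabilityMeasure P]
    (D : Ω → ℝ) (X : Ω → E) (π₀ μ₀ : E → ℝ) (p₀ c : ℝ)
    (mX : MeasurableSpace Ω)
    (ΔY : Ω → ℝ)
    (hD : ∀ ω, D ω = 0 ∨ D ω = 1) (hDm : Measurable[m0] D)
    (hc : c ∈ Set.Ioo (0 : ℝ) (1 / 2))
    (hπ : (fun ω => π₀ (X ω)) =ᵐ[P] P[D | mX])
    (hover : ∀ᵐ ω ∂P, c ≤ π₀ (X ω) ∧ π₀ (X ω) ≤ 1 - c)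
    (hμ₀ : P[(fun ω => (1 - D ω) * (ΔY ω - μ₀ (X ω))) | mX] =ᵐ[P] 0)
    (hp₀pos : 0 < p₀)
    (hintY : Integrable ΔY P) (hintμ : Integrable (fun ω => μ₀ (X ω)) P) :
    ∫ ω, (D ω / p₀ * (ΔY ω - μ₀ (X ω))
        - (1 - D ω) * π₀ (X ω) / (p₀ * (1 - π₀ (X ω))) * (ΔY ω - μ₀ (X ω))) ∂P
      = (∫ ω, ΔY ω * D ω ∂P) / p₀ - (∫ ω, μ₀ (X ω) * D ω ∂P) / p₀ := by
  obtain ⟨hcpos, hc2⟩ := hc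
  by_cases hm : mX ≤ m0
  swap
  · -- degenerate case: the conditional expectation is 0, contradicting overlap
    exfalso
    rw [condExp_of_not_le hm] at hπ
    have hbad : ∀ᵐ ω ∂P, False := by
      filter_upwards [hπ, hover] with ω h1 h2
      simp only [Pi.zero_apply] at h1
      have := h2.1
      rw [h1] at this
      exact hcpos.not_ge this
    obtain ⟨ω, hω⟩ := hbad.exists
    exact hω
  have hDm0 : Measurable[m0] D := hDm
  set g : Ω → ℝ := fun ω => (1 - D ω) * (ΔY ω - μ₀ (X ω)) with hg_def
  set π' : Ω → ℝ := P[D | mX] with hπ'_def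
  have hπ'sm : StronglyMeasurable[mX] π' := stronglyMeasurable_condExp
  set f' : Ω → ℝ := fun ω => π' ω / (p₀ * (1 - π' ω)) with hf'_def
  have hf'sm : StronglyMeasurable[mX] f' :=
    (hπ'sm.measurable.div
      (measurable_const.mul (measurable_const.sub hπ'sm.measurable))).stronglyMeasurable
  have hbound : ∀ᵐ ω ∂P, c ≤ π' ω ∧ π' ω ≤ 1 - c := by
    filter_upwards [hover, hπ] with ω h h2
    rw [← h2]; exact h
  have hf'b : ∀ᵐ ω ∂P, ‖f' ω‖ ≤ (1 - c) / (p₀ * c) := by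
    filter_upwards [hbound] with ω hω
    obtain ⟨h1, h2⟩ := hω
    have h1π : c ≤ 1 - π' ω := by linarith
    have hden : 0 < p₀ * (1 - π' ω) := by nlinarith
    rw [Real.norm_eq_abs, abs_of_nonneg (div_nonneg (by linarith) hden.le)]
    exact div_le_div₀ (by linarith) h2 (by positivity)
      (mul_le_mul_of_nonneg_left h1π hp₀pos.le)
  have hDb : ∀ᵐ ω ∂P, ‖1 - D ω‖ ≤ 1 := by
    filter_upwards with ω
    rcases hD ω with h | h <;> simp [h]
  have hDsm : AEStronglyMeasurable[m0] (fun ω => 1 - D ω) P :=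
    (hDm0.const_sub 1).aestronglyMeasurable
  have hg_int : Integrable g P :=
    (hintY.sub hintμ).bdd_mul hDsm hDb
  have hf'sm0 : AEStronglyMeasurable[m0] f' P := (hf'sm.mono hm).aestronglyMeasurable
  have hf'g_int : Integrable (f' * g) P :=
    hg_int.bdd_mul hf'sm0 hf'b
  have hkey : P[(f' * g) | mX] =ᵐ[P] 0 := by
    refine (condExp_mul_of_stronglyMeasurable_left hf'sm hf'g_int hg_int).trans ?_
    filter_upwards [hμ₀] with ω h
    simp only [Pi.mul_apply, Pi.zero_apply] at h ⊢
    rw [h, mul_zero]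
  have hint0 : ∫ ω, (f' * g) ω ∂P = 0 := by
    rw [← integral_condExp hm (f := f' * g)]
    rw [integral_congr_ae hkey]
    simp
  have hterm2 : (fun ω => (1 - D ω) * π₀ (X ω) / (p₀ * (1 - π₀ (X ω))) * (ΔY ω - μ₀ (X ω)))
      =ᵐ[P] f' * g := by
    filter_upwards [hπ] with ω h
    simp only [Pi.mul_apply, hf'_def, hg_def]
    rw [h]
    ring
  have hterm2_int : Integrable
      (fun ω => (1 - D ω) * π₀ (X ω) / (p₀ * (1 - π₀ (X ω))) * (ΔY ω - μ₀ (X ω))) P :=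
    hf'g_int.congr hterm2.symm
  have hDb' : ∀ᵐ ω ∂P, ‖D ω / p₀‖ ≤ 1 / p₀ := by
    filter_upwards with ω
    rcases hD ω with h | h <;> simp [h, abs_of_nonneg hp₀pos.le, le_div_iff₀ hp₀pos, hp₀pos.le]
  have hDsm' : AEStronglyMeasurable[m0] (fun ω => D ω / p₀) P :=
    (hDm0.div_const _).aestronglyMeasurable
  have hterm1_int : Integrable (fun ω => D ω / p₀ * (ΔY ω - μ₀ (X ω))) P :=
    (hintY.sub hintμ).bdd_mul hDsm' hDb'
  have hDsm'' : AEStronglyMeasurable[m0] D P := hDm0.aestronglyMeasurable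
  have hDb'' : ∀ᵐ ω ∂P, ‖D ω‖ ≤ 1 := by
    filter_upwards with ω
    rcases hD ω with h | h <;> simp [h]
  have hYD_int : Integrable (fun ω => ΔY ω * D ω) P := by
    refine (hintY.bdd_mul hDsm'' hDb'').congr ?_
    filter_upwards with ω; ring
  have hμD_int : Integrable (fun ω => μ₀ (X ω) * D ω) P := by
    refine (hintμ.bdd_mul hDsm'' hDb'').congr ?_
    filter_upwards with ω; ring
  have hterm1 : ∫ ω, D ω / p₀ * (ΔY ω - μ₀ (X ω)) ∂P
      = (∫ ω, ΔY ω * D ω ∂P) / p₀ - (∫ ω, μ₀ (X ω) * D ω ∂P) / p₀ := by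
    have heq : (fun ω => D ω / p₀ * (ΔY ω - μ₀ (X ω)))
        = fun ω => ΔY ω * D ω / p₀ - μ₀ (X ω) * D ω / p₀ := by
      funext ω; ring
    rw [heq, integral_sub (hYD_int.div_const _) (hμD_int.div_const _),
      integral_div, integral_div]
  rw [integral_sub hterm1_int hterm2_int, hterm1, integral_congr_ae hterm2, hint0, sub_zero]

/-- Moment identity of the DR score: With
`ψ(W) = (D/p₀)(ΔY − μ₀(X)) − ((1−D)π₀(X)/(p₀(1−π₀(X))))(ΔY − μ₀(X))`, where
`π₀(X) = E[D|X]`, `μ₀(X)` a version of `E[ΔY | X, D=0]`, and `p₀ = P(D=1) ∈ (0,1)`,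
under overlap and integrability, `E[ψ(W)] = E[ΔY | D=1] − E[μ₀(X) | D=1]`,
where `E[f | D=1] = E[f·D]/p₀`. -/
theorem stmt5 {Ω E : Type*} (mX : MeasurableSpace Ω) [MeasurableSpace Ω] [MeasurableSpace E]
    (P : Measure Ω) [IsProbabilityMeasure P]
    (D : Ω → ℝ) (X : Ω → E) (π₀ μ₀ : E → ℝ) (p₀ c : ℝ)
    (hmX : mX = MeasurableSpace.comap X inferInstance)
    (hle : mX ≤ ‹MeasurableSpace Ω›)
    (ΔY : Ω → ℝ)
    (hD : ∀ ω, D ω = 0 ∨ D ω = 1) (hDm : Measurable D) (hX : Measurable X)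
    (hc : c ∈ Set.Ioo (0 : ℝ) (1 / 2))
    (hπ : (fun ω => π₀ (X ω)) =ᵐ[P] P[D | mX])
    (hover : ∀ᵐ ω ∂P, c ≤ π₀ (X ω) ∧ π₀ (X ω) ≤ 1 - c)
    (hμ₀ : P[(fun ω => (1 - D ω) * (ΔY ω - μ₀ (X ω))) | mX] =ᵐ[P] 0)
    (hp₀ : p₀ = ∫ ω, D ω ∂P) (hp₀pos : 0 < p₀) (hp₀lt : p₀ < 1)
    (hintY : Integrable ΔY P) (hintμ : Integrable (fun ω => μ₀ (X ω)) P)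
    (hintψ : Integrable (fun ω =>
      D ω / p₀ * (ΔY ω - μ₀ (X ω))
        - (1 - D ω) * π₀ (X ω) / (p₀ * (1 - π₀ (X ω))) * (ΔY ω - μ₀ (X ω))) P) :
    ∫ ω, (D ω / p₀ * (ΔY ω - μ₀ (X ω))
        - (1 - D ω) * π₀ (X ω) / (p₀ * (1 - π₀ (X ω))) * (ΔY ω - μ₀ (X ω))) ∂P
      = (∫ ω, ΔY ω * D ω ∂P) / p₀ - (∫ ω, μ₀ (X ω) * D ω ∂P) / p₀ :=
  stmt5_aux P D X π₀ μ₀ p₀ c mX ΔY hD hDm hc hπ hover hμ₀ hp₀pos hintY hintμ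
end

section
/- (Gateaux derivative vanishes in the outcome direction) For η_ε = (π₀, μ₀ + ε h) with h(X) integrable and square-integrable, the moment map Ψ(η_ε) = E[ψ_{p₀}(W; π₀, μ₀ + ε h)] satisfies dΨ(η_ε)/dε |_{ε=0} = E[(−D/p₀ + (1−D)π₀(X)/(p₀(1−π₀(X))))·h(X)] = 0. -/
open MeasureTheory

/-- Gateaux derivative vanishes in the outcome direction: For the path
`η_ε = (π₀, μ₀ + ε h)` with `h(X)` integrable and square-integrable, the moment map
`Ψ(ε) = E[ψ_{p₀}(W; π₀, μ₀ + ε h)]` satisfies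
`Ψ'(0) = E[(−D/p₀ + (1−D)π₀(X)/(p₀(1−π₀(X))))·h(X)] = 0`, where
`ψ_p(W; π, μ) = (D/p)(ΔY − μ(X)) − ((1−D)π(X)/(p(1−π(X))))(ΔY − μ(X))`. -/
theorem stmt10 {Ω E : Type*} (mX : MeasurableSpace Ω) [MeasurableSpace Ω] [MeasurableSpace E]
    (P : Measure Ω) [IsProbabilityMeasure P]
    (D : Ω → ℝ) (X : Ω → E) (π₀ μ₀ h : E → ℝ) (p₀ c : ℝ)
    (hmX : mX = MeasurableSpace.comap X inferInstance)
    (hle : mX ≤ ‹MeasurableSpace Ω›)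
    (ΔY : Ω → ℝ)
    (hD : ∀ ω, D ω = 0 ∨ D ω = 1) (hDm : Measurable D) (hX : Measurable X)
    (hc : c ∈ Set.Ioo (0 : ℝ) (1 / 2))
    (hπ : (fun ω => π₀ (X ω)) =ᵐ[P] P[D | mX])
    (hover : ∀ᵐ ω ∂P, c ≤ π₀ (X ω) ∧ π₀ (X ω) ≤ 1 - c)
    (hμ₀ : P[(fun ω => (1 - D ω) * (ΔY ω - μ₀ (X ω))) | mX] =ᵐ[P] 0)
    (hp₀ : p₀ = ∫ ω, D ω ∂P) (hp₀pos : 0 < p₀) (hp₀lt : p₀ < 1)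
    (hh : Measurable h) (hhint : Integrable (fun ω => h (X ω)) P)
    (hhsq : Integrable (fun ω => (h (X ω)) ^ 2) P)
    (hintψ : ∀ ε : ℝ, Integrable (fun ω =>
      D ω / p₀ * (ΔY ω - (μ₀ (X ω) + ε * h (X ω)))
        - (1 - D ω) * π₀ (X ω) / (p₀ * (1 - π₀ (X ω)))
            * (ΔY ω - (μ₀ (X ω) + ε * h (X ω)))) P)
    (hintd : Integrable (fun ω =>
      (-(D ω) / p₀ + (1 - D ω) * π₀ (X ω) / (p₀ * (1 - π₀ (X ω)))) * h (X ω)) P) :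
    HasDerivAt (fun ε : ℝ => ∫ ω,
        (D ω / p₀ * (ΔY ω - (μ₀ (X ω) + ε * h (X ω)))
          - (1 - D ω) * π₀ (X ω) / (p₀ * (1 - π₀ (X ω)))
              * (ΔY ω - (μ₀ (X ω) + ε * h (X ω)))) ∂P)
      (∫ ω, (-(D ω) / p₀ + (1 - D ω) * π₀ (X ω) / (p₀ * (1 - π₀ (X ω)))) * h (X ω) ∂P)
      0
    ∧ (∫ ω, (-(D ω) / p₀
          + (1 - D ω) * π₀ (X ω) / (p₀ * (1 - π₀ (X ω)))) * h (X ω) ∂P) = 0 := by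
  classical
  rename_i m0 mE hPP
  by_cases hle' : mX ≤ m0
  swap
  · -- degenerate case: the conditional expectation is 0, contradicting overlap
    exfalso
    have hzero : P[D | mX] = 0 := condExp_of_not_le hle'
    have hbad : ∀ᵐ ω ∂P, False := by
      filter_upwards [hπ, hover] with ω h1 h2
      have : π₀ (X ω) = 0 := by rw [h1, hzero]; rfl
      exact absurd (this ▸ h2.1) (not_le.mpr hc.1)
    have hne : (ae P).NeBot := ae_neBot.2 (IsProbabilityMeasure.ne_zero P)
    exact hne.ne (Filter.eventually_false_iff_eq_bot.mp hbad)
  have hp₀ne : p₀ ≠ 0 := ne_of_gt hp₀pos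
  have hc0 : (0:ℝ) < c := hc.1
  set g : Ω → ℝ := P[D | mX] with hgdef
  have hgsm : StronglyMeasurable[mX] g := stronglyMeasurable_condExp
  set k : Ω → ℝ := fun ω => h (X ω) / (p₀ * (1 - g ω)) with hkdef
  have hksm : StronglyMeasurable[mX] k := by
    have : Measurable[mX] k :=
      (hh.comp (show Measurable[mX] X by rw [hmX]; exact comap_measurable X)).div (measurable_const.mul (measurable_const.sub hgsm.measurable))
    exact this.stronglyMeasurable
  have hDint : Integrable D P := by
    have h1 : Integrable (fun _ : Ω => (1:ℝ)) P := integrable_const 1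
    refine h1.mono' (hDm.stronglyMeasurable.aestronglyMeasurable)
      (ae_of_all _ fun ω => ?_)
    rcases hD ω with hd | hd <;> simp [hd]
  have hgood : ∀ᵐ ω ∂P, π₀ (X ω) = g ω ∧ c ≤ g ω ∧ g ω ≤ 1 - c := by
    filter_upwards [hπ, hover] with ω h1 h2
    exact ⟨h1, h1 ▸ h2.1, h1 ▸ h2.2⟩
  -- integrability of g * k
  have hgk_int : Integrable (fun ω => g ω * k ω) P := by
    have hb : Integrable (fun ω => (1 - c)/(c*p₀) * |h (X ω)|) P :=
      hhint.abs.const_mul _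
    have hm : AEStronglyMeasurable[m0] (fun ω => g ω * k ω) P :=
      ((hgsm.mul hksm).mono hle').aestronglyMeasurable
    refine hb.mono' hm ?_
    filter_upwards [hgood] with ω hω
    obtain ⟨-, hc1, hc2⟩ := hω
    have h1g : c ≤ 1 - g ω := by linarith
    have h1gpos : 0 < 1 - g ω := lt_of_lt_of_le hc0 h1g
    have habs : |g ω * k ω| = g ω / (p₀ * (1 - g ω)) * |h (X ω)| := by
      simp only [hkdef]
      rw [abs_mul, abs_div, abs_of_nonneg (le_of_lt (lt_of_lt_of_le hc0 hc1)),
        abs_of_pos (by positivity : (0:ℝ) < p₀ * (1 - g ω))]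
      ring
    rw [Real.norm_eq_abs, habs]
    have hkey : g ω / (p₀ * (1 - g ω)) ≤ (1 - c)/(c*p₀) := by
      rw [div_le_div_iff₀ (by positivity) (by positivity)]
      nlinarith
    exact mul_le_mul_of_nonneg_right hkey (abs_nonneg _)
  -- B = g k - k D a.e.
  have hBeq : (fun ω => (-(D ω) / p₀
        + (1 - D ω) * π₀ (X ω) / (p₀ * (1 - π₀ (X ω)))) * h (X ω))
      =ᵐ[P] fun ω => g ω * k ω - k ω * D ω := by
    filter_upwards [hgood] with ω hω
    obtain ⟨heq, hc1, hc2⟩ := hω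
    have h1gpos : (0:ℝ) < 1 - g ω := by linarith
    simp only [hkdef]
    rw [← heq]
    have hne : (1 : ℝ) - π₀ (X ω) ≠ 0 := by rw [heq]; exact ne_of_gt h1gpos
    field_simp
    ring
  have hkD_int : Integrable (fun ω => k ω * D ω) P := by
    refine (hgk_int.sub hintd).congr ?_
    filter_upwards [hBeq] with ω hω
    simp only [Pi.sub_apply]
    rw [hω]; ring
  have hcond : P[(fun ω => k ω * D ω) | mX] =ᵐ[P] fun ω => k ω * g ω :=
    condExp_mul_of_stronglyMeasurable_left hksm hkD_int hDint
  haveI : SigmaFinite (P.trim hle') := by infer_instance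
  have hint_eq : ∫ ω, k ω * D ω ∂P = ∫ ω, g ω * k ω ∂P := by
    calc ∫ ω, k ω * D ω ∂P = ∫ ω, (P[(fun ω => k ω * D ω) | mX]) ω ∂P :=
          (integral_condExp hle').symm
      _ = ∫ ω, k ω * g ω ∂P := integral_congr_ae hcond
      _ = ∫ ω, g ω * k ω ∂P := integral_congr_ae (ae_of_all _ fun ω => mul_comm _ _)
  have hI : (∫ ω, (-(D ω) / p₀
        + (1 - D ω) * π₀ (X ω) / (p₀ * (1 - π₀ (X ω)))) * h (X ω) ∂P) = 0 := by
    rw [integral_congr_ae hBeq, integral_sub hgk_int hkD_int, hint_eq, sub_self]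
  refine ⟨?_, hI⟩
  set I := ∫ ω, (-(D ω) / p₀
      + (1 - D ω) * π₀ (X ω) / (p₀ * (1 - π₀ (X ω)))) * h (X ω) ∂P with hIdef
  have hfun : (fun ε : ℝ => ∫ ω,
        (D ω / p₀ * (ΔY ω - (μ₀ (X ω) + ε * h (X ω)))
          - (1 - D ω) * π₀ (X ω) / (p₀ * (1 - π₀ (X ω)))
              * (ΔY ω - (μ₀ (X ω) + ε * h (X ω)))) ∂P)
      = fun ε : ℝ => (∫ ω,
        (D ω / p₀ * (ΔY ω - (μ₀ (X ω) + 0 * h (X ω)))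
          - (1 - D ω) * π₀ (X ω) / (p₀ * (1 - π₀ (X ω)))
              * (ΔY ω - (μ₀ (X ω) + 0 * h (X ω)))) ∂P) + ε * I := by
    funext ε
    have hsplit : (fun ω =>
        D ω / p₀ * (ΔY ω - (μ₀ (X ω) + ε * h (X ω)))
          - (1 - D ω) * π₀ (X ω) / (p₀ * (1 - π₀ (X ω)))
              * (ΔY ω - (μ₀ (X ω) + ε * h (X ω))))
        = fun ω =>
        (D ω / p₀ * (ΔY ω - (μ₀ (X ω) + 0 * h (X ω)))
          - (1 - D ω) * π₀ (X ω) / (p₀ * (1 - π₀ (X ω)))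
              * (ΔY ω - (μ₀ (X ω) + 0 * h (X ω))))
          + ε * ((-(D ω) / p₀
            + (1 - D ω) * π₀ (X ω) / (p₀ * (1 - π₀ (X ω)))) * h (X ω)) :=
      funext fun ω => by ring
    rw [hsplit, integral_add (hintψ 0) (hintd.const_mul ε), integral_const_mul]
  rw [hfun]
  have hd : HasDerivAt (fun ε : ℝ => (∫ ω,
        (D ω / p₀ * (ΔY ω - (μ₀ (X ω) + 0 * h (X ω)))
          - (1 - D ω) * π₀ (X ω) / (p₀ * (1 - π₀ (X ω)))
              * (ΔY ω - (μ₀ (X ω) + 0 * h (X ω)))) ∂P) + ε * I) (1 * I) 0 :=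
    ((hasDerivAt_id (0:ℝ)).mul_const I).const_add _
  simpa using hd
end

section
/- (Gateaux derivative vanishes in the propensity direction) For the path π_ε = π₀ + ε h_π, the derivative of the control-weight factor satisfies d/dε [π_ε(X)/(1−π_ε(X))]|_{ε=0} = h_π(X)/(1−π₀(X))², and consequently d/dε E[ψ_{p₀}(W; π_ε, μ₀)]|_{ε=0} = −E[(1−D)·h_π(X)/(p₀(1−π₀(X))²)·(ΔY − μ₀(X))] = 0, because E[ΔY − μ₀(X) | X, D=0] = 0. -/
open MeasureTheory

lemma deriv_aux1 (a h : ℝ) (hne : (1:ℝ) - a ≠ 0) :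
    HasDerivAt (fun ε : ℝ => (a + ε * h) / (1 - (a + ε * h))) (h / (1 - a) ^ 2) 0 := by
  have hnum : HasDerivAt (fun ε : ℝ => a + ε * h) h 0 :=
    (hasDerivAt_mul_const h).const_add a
  have hden : HasDerivAt (fun ε : ℝ => 1 - (a + ε * h)) (-h) 0 :=
    hnum.const_sub 1
  have hd0 : (1 : ℝ) - (a + 0 * h) ≠ 0 := by simpa using hne
  have := hnum.fun_div hden hd0
  refine this.congr_deriv ?_
  simp only [zero_mul, add_zero]
  field_simp
  ring

lemma deriv_aux2 (a h r d p ε₀ : ℝ) (hp : p ≠ 0) (hne : (1:ℝ) - (a + ε₀ * h) ≠ 0) :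
    HasDerivAt (fun ε : ℝ => d / p * r - (1 - d) * (a + ε * h) / (p * (1 - (a + ε * h))) * r)
      (-((1 - d) * h / (p * (1 - (a + ε₀ * h)) ^ 2) * r)) ε₀ := by
  have hnum : HasDerivAt (fun ε : ℝ => (1 - d) * (a + ε * h)) ((1 - d) * h) ε₀ :=
    (((hasDerivAt_mul_const h).const_add a).const_mul (1 - d))
  have hden : HasDerivAt (fun ε : ℝ => p * (1 - (a + ε * h))) (p * (-h)) ε₀ :=
    (((hasDerivAt_mul_const h).const_add a).const_sub 1).const_mul p
  have hd0 : p * (1 - (a + ε₀ * h)) ≠ 0 := mul_ne_zero hp hne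
  have := ((hnum.fun_div hden hd0).mul_const r).const_sub (d / p * r)
  refine this.congr_deriv ?_
  field_simp
  ring

lemma quot_aux (r p a h d : ℝ) (hp : 0 < p) (ha0 : 0 < a) (ha1 : a < 1)
    (hd : d = 0 ∨ d = 1) :
    (d / p * r - (1 - d) * (a + 0 * h) / (p * (1 - (a + 0 * h))) * r)
      / (d / p - (1 - d) * a / (p * (1 - a))) = r := by
  have h1 : (0:ℝ) < 1 - a := by linarith
  have hnum : (d / p * r - (1 - d) * (a + 0 * h) / (p * (1 - (a + 0 * h))) * r)
      = (d / p - (1 - d) * a / (p * (1 - a))) * r := by ring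
  have hk : d / p - (1 - d) * a / (p * (1 - a)) ≠ 0 := by
    rcases hd with hd | hd <;> subst hd
    · have heq : (0:ℝ) / p - (1 - 0) * a / (p * (1 - a)) = -(a / (p * (1 - a))) := by
        ring
      rw [heq, neg_ne_zero]
      positivity
    · have heq : (1:ℝ) / p - (1 - 1) * a / (p * (1 - a)) = 1 / p := by ring
      rw [heq]
      positivity
  rw [hnum, mul_comm, mul_div_assoc, div_self hk, mul_one]


lemma stmt11_deriv {Ω E : Type*} [MeasurableSpace Ω] [MeasurableSpace E]
    (P : Measure Ω) [IsProbabilityMeasure P]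
    (D : Ω → ℝ) (X : Ω → E) (π₀ μ₀ hπf : E → ℝ) (ΔY : Ω → ℝ) (p₀ c B : ℝ)
    (hp₀pos : 0 < p₀) (hc0 : 0 < c) (hB : 0 < B) (hhb : ∀ x, |hπf x| ≤ B)
    (hD : ∀ ω, D ω = 0 ∨ D ω = 1)
    (hover : ∀ᵐ ω ∂P, c ≤ π₀ (X ω) ∧ π₀ (X ω) ≤ 1 - c)
    (hintres : Integrable (fun ω => |ΔY ω - μ₀ (X ω)|) P)
    (hintd : Integrable (fun ω =>
      (1 - D ω) * hπf (X ω) / (p₀ * (1 - π₀ (X ω)) ^ 2) * (ΔY ω - μ₀ (X ω))) P)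
    (hintψ : ∀ ε : ℝ, Integrable (fun ω =>
      D ω / p₀ * (ΔY ω - μ₀ (X ω))
        - (1 - D ω) * (π₀ (X ω) + ε * hπf (X ω))
            / (p₀ * (1 - (π₀ (X ω) + ε * hπf (X ω)))) * (ΔY ω - μ₀ (X ω))) P) :
    HasDerivAt (fun ε : ℝ => ∫ ω,
          (D ω / p₀ * (ΔY ω - μ₀ (X ω))
            - (1 - D ω) * (π₀ (X ω) + ε * hπf (X ω))
                / (p₀ * (1 - (π₀ (X ω) + ε * hπf (X ω)))) * (ΔY ω - μ₀ (X ω))) ∂P)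
        (-(∫ ω, (1 - D ω) * hπf (X ω) / (p₀ * (1 - π₀ (X ω)) ^ 2)
            * (ΔY ω - μ₀ (X ω)) ∂P)) 0 := by
  have hp0 : p₀ ≠ 0 := ne_of_gt hp₀pos
  set F' : ℝ → Ω → ℝ := fun ε ω =>
    -((1 - D ω) * hπf (X ω) / (p₀ * (1 - (π₀ (X ω) + ε * hπf (X ω))) ^ 2)
        * (ΔY ω - μ₀ (X ω))) with hF'def
  have e0 : F' 0 = fun ω =>
      -((1 - D ω) * hπf (X ω) / (p₀ * (1 - π₀ (X ω)) ^ 2) * (ΔY ω - μ₀ (X ω))) := by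
    funext ω; simp [hF'def]
  have hδpos : (0:ℝ) < c / (2 * B) := by positivity
  have key : ∀ᵐ ω ∂P, ∀ ε ∈ Metric.ball (0:ℝ) (c / (2 * B)),
      c / 2 < 1 - (π₀ (X ω) + ε * hπf (X ω)) := by
    filter_upwards [hover] with ω hω ε hε
    have hεb : |ε| < c / (2 * B) := by simpa [Real.dist_eq] using hε
    have hstep : |ε * hπf (X ω)| ≤ |ε| * B := by
      rw [abs_mul]; exact mul_le_mul_of_nonneg_left (hhb _) (abs_nonneg _)
    have h2 : |ε * hπf (X ω)| < c / 2 := by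
      refine lt_of_le_of_lt hstep ?_
      calc |ε| * B < c / (2 * B) * B := mul_lt_mul_of_pos_right hεb hB
        _ = c / 2 := by field_simp
    have h3 := abs_lt.mp h2
    nlinarith [hω.1, hω.2, h3.1, h3.2]
  have h1d : ∀ ω, |1 - D ω| ≤ 1 := by
    intro ω; rcases hD ω with h | h <;> simp [h]
  have main := hasDerivAt_integral_of_dominated_loc_of_deriv_le (μ := P) (x₀ := (0:ℝ))
    (F := fun ε ω => D ω / p₀ * (ΔY ω - μ₀ (X ω))
        - (1 - D ω) * (π₀ (X ω) + ε * hπf (X ω))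
            / (p₀ * (1 - (π₀ (X ω) + ε * hπf (X ω)))) * (ΔY ω - μ₀ (X ω)))
    (F' := F')
    (bound := fun ω => B / (p₀ * (c / 2) ^ 2) * |ΔY ω - μ₀ (X ω)|)
    (Metric.ball_mem_nhds 0 hδpos)
    (Filter.Eventually.of_forall fun ε => (hintψ ε).aestronglyMeasurable)
    (hintψ 0)
    (by rw [e0]; exact hintd.neg.aestronglyMeasurable)
    (by
      filter_upwards [key] with ω hω ε hε
      have hq := hω ε hε
      have hqpos : (0:ℝ) < 1 - (π₀ (X ω) + ε * hπf (X ω)) :=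
        lt_trans (by positivity) hq
      have hcalc : ‖F' ε ω‖ = |1 - D ω| * |hπf (X ω)|
          / (p₀ * (1 - (π₀ (X ω) + ε * hπf (X ω))) ^ 2) * |ΔY ω - μ₀ (X ω)| := by
        rw [Real.norm_eq_abs, hF'def, abs_neg, abs_mul, abs_div, abs_mul,
          abs_of_pos (mul_pos hp₀pos (pow_pos hqpos 2))]
      rw [hcalc]
      calc |1 - D ω| * |hπf (X ω)| / (p₀ * (1 - (π₀ (X ω) + ε * hπf (X ω))) ^ 2)
            * |ΔY ω - μ₀ (X ω)|
          ≤ 1 * B / (p₀ * (c / 2) ^ 2) * |ΔY ω - μ₀ (X ω)| := by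
            gcongr <;> first
              | exact h1d ω
              | exact hhb _
              | exact hq.le
              | positivity
        _ = B / (p₀ * (c / 2) ^ 2) * |ΔY ω - μ₀ (X ω)| := by ring
      )
    (hintres.const_mul _)
    (by
      filter_upwards [key] with ω hω ε hε
      have hq := hω ε hε
      have hne : (1:ℝ) - (π₀ (X ω) + ε * hπf (X ω)) ≠ 0 :=
        ne_of_gt (lt_trans (by positivity) hq)
      exact deriv_aux2 _ _ _ _ _ _ hp0 hne)
  have hd2 := main.2
  rw [e0, integral_neg] at hd2
  exact hd2

/-- Gateaux derivative vanishes in the propensity direction: Along the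
path `π_ε = π₀ + ε h_π` (with `h_π` bounded), the control-weight factor satisfies
`d/dε [π_ε(X)/(1−π_ε(X))]|_{ε=0} = h_π(X)/(1−π₀(X))²` a.s., and consequently
`d/dε E[ψ_{p₀}(W; π_ε, μ₀)]|_{ε=0}
  = −E[(1−D)·h_π(X)/(p₀(1−π₀(X))²)·(ΔY − μ₀(X))] = 0`,
because `E[ΔY − μ₀(X) | X, D=0] = 0`. -/
theorem stmt11 {Ω E : Type*} (mX : MeasurableSpace Ω) [MeasurableSpace Ω] [MeasurableSpace E]
    (P : Measure Ω) [IsProbabilityMeasure P]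
    (D : Ω → ℝ) (X : Ω → E) (π₀ μ₀ hπf : E → ℝ) (p₀ c B : ℝ)
    (hmX : mX = MeasurableSpace.comap X inferInstance)
    (hle : mX ≤ ‹MeasurableSpace Ω›)
    (ΔY : Ω → ℝ)
    (hD : ∀ ω, D ω = 0 ∨ D ω = 1) (hDm : Measurable D) (hX : Measurable X)
    (hc : c ∈ Set.Ioo (0 : ℝ) (1 / 2))
    (hπ : (fun ω => π₀ (X ω)) =ᵐ[P] P[D | mX])
    (hover : ∀ᵐ ω ∂P, c ≤ π₀ (X ω) ∧ π₀ (X ω) ≤ 1 - c)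
    (hμ₀ : P[(fun ω => (1 - D ω) * (ΔY ω - μ₀ (X ω))) | mX] =ᵐ[P] 0)
    (hp₀ : p₀ = ∫ ω, D ω ∂P) (hp₀pos : 0 < p₀) (hp₀lt : p₀ < 1)
    (hhm : Measurable hπf) (hB : 0 < B) (hhb : ∀ x, |hπf x| ≤ B)
    (hintY2 : Integrable (fun ω => (ΔY ω) ^ 2) P)
    (hintres : Integrable (fun ω => |ΔY ω - μ₀ (X ω)|) P)
    (hintd : Integrable (fun ω =>
      (1 - D ω) * hπf (X ω) / (p₀ * (1 - π₀ (X ω)) ^ 2) * (ΔY ω - μ₀ (X ω))) P)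
    (hintψ : ∀ ε : ℝ, Integrable (fun ω =>
      D ω / p₀ * (ΔY ω - μ₀ (X ω))
        - (1 - D ω) * (π₀ (X ω) + ε * hπf (X ω))
            / (p₀ * (1 - (π₀ (X ω) + ε * hπf (X ω)))) * (ΔY ω - μ₀ (X ω))) P) :
    (∀ᵐ ω ∂P, HasDerivAt
        (fun ε : ℝ => (π₀ (X ω) + ε * hπf (X ω)) / (1 - (π₀ (X ω) + ε * hπf (X ω))))
        (hπf (X ω) / (1 - π₀ (X ω)) ^ 2) 0)
    ∧ HasDerivAt (fun ε : ℝ => ∫ ω,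
          (D ω / p₀ * (ΔY ω - μ₀ (X ω))
            - (1 - D ω) * (π₀ (X ω) + ε * hπf (X ω))
                / (p₀ * (1 - (π₀ (X ω) + ε * hπf (X ω)))) * (ΔY ω - μ₀ (X ω))) ∂P)
        (-(∫ ω, (1 - D ω) * hπf (X ω) / (p₀ * (1 - π₀ (X ω)) ^ 2)
            * (ΔY ω - μ₀ (X ω)) ∂P)) 0
    ∧ (-(∫ ω, (1 - D ω) * hπf (X ω) / (p₀ * (1 - π₀ (X ω)) ^ 2)
          * (ΔY ω - μ₀ (X ω)) ∂P)) = 0 := by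
  obtain ⟨hc0, hc12⟩ := hc
  have hp0 : p₀ ≠ 0 := ne_of_gt hp₀pos
  rename_i instΩ instE instP
  have h1d : ∀ ω, |1 - D ω| ≤ 1 := by
    intro ω; rcases hD ω with h | h <;> simp [h]
  by_cases hm : mX ≤ instΩ
  · -- Part 1
    have part1 : ∀ᵐ ω ∂P, HasDerivAt
        (fun ε : ℝ => (π₀ (X ω) + ε * hπf (X ω)) / (1 - (π₀ (X ω) + ε * hπf (X ω))))
        (hπf (X ω) / (1 - π₀ (X ω)) ^ 2) 0 := by
      filter_upwards [hover] with ω hω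
      have hne : (1:ℝ) - π₀ (X ω) ≠ 0 := by nlinarith [hω.1, hω.2]
      exact deriv_aux1 _ _ hne
    -- Part 2
    have hd2 := @stmt11_deriv Ω E instΩ instE P instP D X π₀ μ₀ hπf ΔY p₀ c B
      hp₀pos hc0 hB hhb hD hover hintres hintd hintψ
    refine ⟨part1, hd2, ?_⟩
    -- Part 3
    have hDm' : @Measurable Ω ℝ instΩ _ D := hDm
    set f : Ω → ℝ := fun ω => hπf (X ω) / (p₀ * (1 - π₀ (X ω)) ^ 2) with hfdef
    set g : Ω → ℝ := fun ω => (1 - D ω) * (ΔY ω - μ₀ (X ω)) with hgdef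
    have hXm : Measurable[mX] X := by
      rw [hmX]; exact Measurable.of_comap_le le_rfl
    -- π₀ ∘ X is a.e. measurable (w.r.t. the ambient σ-algebra)
    have hπaem : AEMeasurable (fun ω => π₀ (X ω)) P :=
      ⟨P[D | mX], (stronglyMeasurable_condExp.mono hm).measurable, hπ⟩
    -- residual ΔY - μ₀(X) is a.e. strongly measurable
    have hraesm : AEStronglyMeasurable[instΩ] (fun ω => ΔY ω - μ₀ (X ω)) P := by
      have hden : AEMeasurable
          (fun ω => D ω / p₀ - (1 - D ω) * π₀ (X ω) / (p₀ * (1 - π₀ (X ω)))) P :=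
        ((hDm'.aemeasurable.div aemeasurable_const).sub
          (((aemeasurable_const.sub hDm'.aemeasurable).mul hπaem).div
            (aemeasurable_const.mul (aemeasurable_const.sub hπaem))))
      have hquot : AEMeasurable (fun ω =>
          (D ω / p₀ * (ΔY ω - μ₀ (X ω))
            - (1 - D ω) * (π₀ (X ω) + 0 * hπf (X ω))
                / (p₀ * (1 - (π₀ (X ω) + 0 * hπf (X ω)))) * (ΔY ω - μ₀ (X ω)))
          / (D ω / p₀ - (1 - D ω) * π₀ (X ω) / (p₀ * (1 - π₀ (X ω))))) P :=
        (hintψ 0).aestronglyMeasurable.aemeasurable.div hden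
      refine hquot.aestronglyMeasurable.congr ?_
      filter_upwards [hover] with ω hω
      have hπpos : (0:ℝ) < π₀ (X ω) := lt_of_lt_of_le hc0 hω.1
      have hπlt : π₀ (X ω) < 1 := by nlinarith [hω.2]
      exact quot_aux _ _ _ _ _ hp₀pos hπpos hπlt (hD ω)
    have hgaesm : AEStronglyMeasurable[instΩ] g P := by
      rw [hgdef]
      exact ((aemeasurable_const.sub hDm'.aemeasurable).mul
        hraesm.aemeasurable).aestronglyMeasurable
    have hg_int : Integrable g P := by
      refine Integrable.mono hintres hgaesm ?_
      filter_upwards with ω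
      rw [Real.norm_eq_abs, Real.norm_eq_abs, hgdef, abs_abs]
      simp only
      rw [abs_mul]
      calc |1 - D ω| * |ΔY ω - μ₀ (X ω)| ≤ 1 * |ΔY ω - μ₀ (X ω)| :=
            mul_le_mul_of_nonneg_right (h1d ω) (abs_nonneg _)
        _ = |ΔY ω - μ₀ (X ω)| := one_mul _
    -- f is a.e. mX-strongly-measurable and bounded
    have hfaesm' : AEStronglyMeasurable[mX] f P := by
      refine ⟨fun ω => hπf (X ω) / (p₀ * (1 - (P[D | mX]) ω) ^ 2), ?_, ?_⟩
      · have h1 : Measurable[mX] fun ω => hπf (X ω) := hhm.comp hXm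
        have h2 : Measurable[mX] fun ω => p₀ * (1 - (P[D | mX]) ω) ^ 2 :=
          (((stronglyMeasurable_condExp.measurable.const_sub 1).pow_const 2)).const_mul p₀
        exact (h1.div h2).stronglyMeasurable
      · filter_upwards [hπ] with ω hω
        rw [hfdef]
        simp only
        rw [hω]
    have hfbound : ∀ᵐ ω ∂P, ‖f ω‖ ≤ B / (p₀ * c ^ 2) := by
      filter_upwards [hover] with ω hω
      have h1π : c ≤ 1 - π₀ (X ω) := by linarith [hω.2]
      have h1πpos : (0:ℝ) < 1 - π₀ (X ω) := lt_of_lt_of_le hc0 h1π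
      rw [Real.norm_eq_abs, hfdef]
      simp only
      rw [abs_div, abs_mul, abs_of_pos hp₀pos, abs_of_pos (pow_pos h1πpos 2)]
      gcongr <;> first
        | exact hhb _
        | exact h1π
        | positivity
    have hfg_eq : (fun ω => (1 - D ω) * hπf (X ω) / (p₀ * (1 - π₀ (X ω)) ^ 2)
        * (ΔY ω - μ₀ (X ω))) = f * g := by
      funext ω
      simp only [Pi.mul_apply, hfdef, hgdef]
      ring
    have hpull : P[f * g | mX] =ᵐ[P] f * P[g | mX] :=
      condExp_stronglyMeasurable_mul_of_bound₀ hm hfaesm' hg_int (B / (p₀ * c ^ 2)) hfbound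
    have hzero : P[f * g | mX] =ᵐ[P] 0 := by
      refine hpull.trans ?_
      filter_upwards [hμ₀] with ω hω
      rw [Pi.mul_apply]
      have hcz : (P[g | mX]) ω = 0 := by
        rw [hgdef]; exact hω
      simp [hcz]
    have hint0 : ∫ ω, (f * g) ω ∂P = 0 := by
      rw [← integral_condExp hm]
      rw [integral_congr_ae hzero]
      simp
    rw [neg_eq_zero, hfg_eq]
    exact hint0
  · exfalso
    have h0 : P[D | mX] = 0 := condExp_of_not_le hm
    rw [h0] at hπ
    obtain ⟨ω, hω1, hω2⟩ := (hover.and hπ).exists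
    have hz : π₀ (X ω) = 0 := hω2
    have hgt : (0:ℝ) < π₀ (X ω) := lt_of_lt_of_le hc0 hω1.1
    rw [hz] at hgt
    exact lt_irrefl 0 hgt
end
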